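/- Mixed unital Clifford channels cannot increase the Pauli spectrum moments: let Λ(ρ) = Σ_{i=1}^k p_i U_i ρ U_i† where p_i ≥ 0, Σ_{i=1}^k p_i = 1, and each U_i is a Clifford unitary on n qubits. Then for every n-qubit state ρ and every integer α > 1, A_α(Λ(ρ)) ≤ A_α(ρ), equivalently −ln A_α(Λ(ρ)) ≥ −ln A_α(ρ). -/

import Mathlib

open Matrix Complex BigOperators
open scoped ComplexOrder

noncomputable section

/-- Index type for `n` qubits: functions `Fin n → Fin 2` (cardinality `2^n`). -/
abbrev QIdx (n : ℕ) := Fin n → Fin 2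

/-- The four single-qubit Pauli matrices: `σ⁰ = I`, `σ¹ = σˣ`, `σ² = σᶻ`, `σ³ = σʸ`. -/
def pauliMat : Fin 4 → Matrix (Fin 2) (Fin 2) ℂ
  | 0 => 1
  | 1 => !![0, 1; 1, 0]
  | 2 => !![1, 0; 0, -1]
  | 3 => !![0, -Complex.I; Complex.I, 0]

/-- The Pauli string `σ^{a_1} ⊗ ⋯ ⊗ σ^{a_n}` as a `2^n × 2^n` matrix. -/
def pauliString {n : ℕ} (a : Fin n → Fin 4) : Matrix (QIdx n) (QIdx n) ℂ :=
  fun i j => ∏ k, pauliMat (a k) (i k) (j k)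

/-- An `n`-qubit state: positive semidefinite with unit trace. -/
def IsState {n : ℕ} (ρ : Matrix (QIdx n) (QIdx n) ℂ) : Prop :=
  ρ.PosSemidef ∧ ρ.trace = 1

/-- The `α`-moment of the Pauli spectrum `A_α(ρ) = 2^{-n} ∑_P |tr(ρP)|^{2α}`. -/
def Amom {n : ℕ} (α : ℝ) (ρ : Matrix (QIdx n) (QIdx n) ℂ) : ℝ :=
  ((2:ℝ)^n)⁻¹ * ∑ a : Fin n → Fin 4, (‖(ρ * pauliString a).trace‖) ^ (2 * α)

/-- The 2-Rényi entropy `S₂(ρ) = -ln tr(ρ²)`. -/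
def S2 {n : ℕ} (ρ : Matrix (QIdx n) (QIdx n) ℂ) : ℝ :=
  - Real.log ((ρ * ρ).trace.re)

/-- The magic witness `W_α(ρ) = (1/(1-α)) ln A_α(ρ) - ((1-2α)/(1-α)) S₂(ρ)`. -/
def Wit {n : ℕ} (α : ℝ) (ρ : Matrix (QIdx n) (QIdx n) ℂ) : ℝ :=
  (1 / (1 - α)) * Real.log (Amom α ρ) - ((1 - 2*α)/(1 - α)) * S2 ρ

/-- The stabilizer norm `D(ρ) = A_{1/2}(ρ) = 2^{-n} ∑_P |tr(ρP)|`. -/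
def Dnorm {n : ℕ} (ρ : Matrix (QIdx n) (QIdx n) ℂ) : ℝ :=
  Amom (1/2) ρ

/-- A Clifford unitary: unitary mapping every Pauli string to `±` a Pauli string. -/
def IsCliffordUnitary {n : ℕ} (U : Matrix (QIdx n) (QIdx n) ℂ) : Prop :=
  U ∈ Matrix.unitaryGroup (QIdx n) ℂ ∧
    ∀ a : Fin n → Fin 4, ∃ (b : Fin n → Fin 4) (ε : ℝ),
      (ε = 1 ∨ ε = -1) ∧ U * pauliString a * Uᴴ = (ε : ℂ) • pauliString b

/-- The computational all-zeros basis vector `|0⟩^{⊗n}`. -/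
def zeroVec (n : ℕ) : QIdx n → ℂ :=
  fun i => if (∀ k, i k = 0) then 1 else 0

/-- A pure stabilizer state vector: `U|0⟩^{⊗n}` for a Clifford unitary `U`. -/
def IsPureStab {n : ℕ} (ψ : QIdx n → ℂ) : Prop :=
  ∃ U, IsCliffordUnitary U ∧ ψ = U.mulVec (zeroVec n)

/-- The rank-one projector `|ψ⟩⟨ψ|`. -/
def proj {n : ℕ} (ψ : QIdx n → ℂ) : Matrix (QIdx n) (QIdx n) ℂ :=
  Matrix.vecMulVec ψ (star ψ)

/-- A mixed stabilizer state: a finite convex combination of pure stabilizer projectors. -/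
def IsMixedStab {n : ℕ} (ρ : Matrix (QIdx n) (QIdx n) ℂ) : Prop :=
  ∃ (k : ℕ) (p : Fin k → ℝ) (ψ : Fin k → QIdx n → ℂ),
    (∀ i, 0 ≤ p i) ∧ (∑ i, p i = 1) ∧ (∀ i, IsPureStab (ψ i)) ∧
    ρ = ∑ i, (p i : ℂ) • proj (ψ i)

/-- The set of values `ln ∑ᵢ |xᵢ|` over finite real stabilizer decompositions of `ρ`. -/
def StabDecomps {n : ℕ} (ρ : Matrix (QIdx n) (QIdx n) ℂ) : Set ℝ :=
  { r | ∃ (k : ℕ) (x : Fin k → ℝ) (ψ : Fin k → QIdx n → ℂ),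
      (∀ i, IsPureStab (ψ i)) ∧ ρ = ∑ i, (x i : ℂ) • proj (ψ i) ∧
      r = Real.log (∑ i, |x i|) }

/-- The log-free robustness of magic. -/
def LR {n : ℕ} (ρ : Matrix (QIdx n) (QIdx n) ℂ) : ℝ := sInf (StabDecomps ρ)

open Classical in
/-- Positive-semidefinite square root (junk value `0` off the PSD cone). -/
def psdSqrt {n : ℕ} (A : Matrix (QIdx n) (QIdx n) ℂ) : Matrix (QIdx n) (QIdx n) ℂ :=
  if h : A.PosSemidef then
    h.1.eigenvectorUnitary.1 * diagonal ((↑) ∘ Real.sqrt ∘ h.1.eigenvalues) *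
      (star h.1.eigenvectorUnitary : Matrix (QIdx n) (QIdx n) ℂ)
  else 0

/-- The Uhlmann fidelity `F(ρ,σ) = (tr √(√ρ σ √ρ))²`. -/
def fidelity {n : ℕ} (ρ σ : Matrix (QIdx n) (QIdx n) ℂ) : ℝ :=
  ((psdSqrt (psdSqrt ρ * σ * psdSqrt ρ)).trace.re) ^ 2

/-- The stabilizer fidelity `D_F(ρ) = inf { -ln F(ρ,σ) : σ a mixed stabilizer state }`. -/
def DF {n : ℕ} (ρ : Matrix (QIdx n) (QIdx n) ℂ) : ℝ :=
  sInf { r | ∃ σ, IsMixedStab σ ∧ r = - Real.log (fidelity ρ σ) }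

/-- Filtered Pauli moment `Ã_α(ρ) = (2^n A_α(ρ) - 1)/(2^n - 1)`. -/
def Atil {n : ℕ} (α : ℝ) (ρ : Matrix (QIdx n) (QIdx n) ℂ) : ℝ :=
  ((2:ℝ)^n * Amom α ρ - 1) / ((2:ℝ)^n - 1)

/-- Filtered stabilizer norm `D̃(ρ) = (2^n D(ρ) - 1)/(2^n - 1)`. -/
def Dtil {n : ℕ} (ρ : Matrix (QIdx n) (QIdx n) ℂ) : ℝ :=
  ((2:ℝ)^n * Dnorm ρ - 1) / ((2:ℝ)^n - 1)

/-- Filtered magic witness `W̃_α(ρ) = (1/(1-α)) ln Ã_α(ρ) + ((1-2α)/(1-α)) ln Ã₁(ρ)`. -/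
def Wtil {n : ℕ} (α : ℝ) (ρ : Matrix (QIdx n) (QIdx n) ℂ) : ℝ :=
  (1/(1-α)) * Real.log (Atil α ρ) + ((1 - 2*α)/(1-α)) * Real.log (Atil 1 ρ)

/-- The maximally mixed state `I/2^n`. -/
def maxMixed (n : ℕ) : Matrix (QIdx n) (QIdx n) ℂ := ((2:ℂ)^n)⁻¹ • 1

/-- The single-qubit T-state vector `|T⟩ = (|0⟩ + e^{-iπ/4}|1⟩)/√2`. -/
def Tket : QIdx 1 → ℂ :=
  fun i => if i 0 = 0 then (Real.sqrt 2 : ℂ)⁻¹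
           else Complex.exp (-(Real.pi/4 : ℂ) * Complex.I) * (Real.sqrt 2 : ℂ)⁻¹

/-- The depolarized T-state `ρ_p = (1-p)|T⟩⟨T| + p·I₂/2`. -/
def rhoDep (p : ℝ) : Matrix (QIdx 1) (QIdx 1) ℂ :=
  ((1 - p : ℝ) : ℂ) • proj Tket + ((p : ℝ) : ℂ) • (((2:ℂ))⁻¹ • 1)


/-! Conjugation by a Clifford unitary permutes the Pauli strings up to sign (the permutation is
injective because distinct Pauli strings are orthogonal for the trace form), so it leaves
`A_α` unchanged. For `2α ≥ 1` the map `t ↦ t ^ (2α)` is increasing and convex on `[0, ∞)`, so by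
the triangle inequality and Jensen each `|tr(Λ(ρ) P)|^(2α)` is at most the `p`-average of the
`|tr(U_i ρ U_iᴴ P)|^(2α)`; summing over `P` gives `A_α(Λ(ρ)) ≤ ∑ p_i A_α(ρ) = A_α(ρ)`. The
logarithmic form needs `A_α(Λ(ρ)) > 0`, which holds because the identity term alone contributes
`2^(-n) |tr Λ(ρ)|^(2α) = 2^(-n)`. -/

section Pauli

variable {n : ℕ}

lemma trace_pauliMat_mul (a b : Fin 4) :
    (pauliMat a * pauliMat b).trace = if a = b then 2 else 0 := by
  fin_cases a <;> fin_cases b <;>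
    simp [pauliMat, trace, Fin.sum_univ_two] <;> ring_nf

lemma pauliString_mul_apply (a b : Fin n → Fin 4) (i j : QIdx n) :
    (pauliString a * pauliString b) i j = ∏ k, (pauliMat (a k) * pauliMat (b k)) (i k) (j k) := by
  simp only [mul_apply, pauliString, ← Finset.prod_mul_distrib]
  exact (Fintype.prod_sum fun k l => pauliMat (a k) (i k) l * pauliMat (b k) l (j k)).symm

lemma trace_pauliString_mul (a b : Fin n → Fin 4) :
    (pauliString a * pauliString b).trace = if a = b then (2 : ℂ) ^ n else 0 := by
  have hprod : (pauliString a * pauliString b).trace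
      = ∏ k, (pauliMat (a k) * pauliMat (b k)).trace := by
    simp only [trace, diag, pauliString_mul_apply]
    exact (Fintype.prod_sum fun k l => (pauliMat (a k) * pauliMat (b k)) l l).symm
  rw [hprod]
  split_ifs with h
  · simp [h, trace_pauliMat_mul]
  · obtain ⟨k, hk⟩ := Function.ne_iff.mp h
    exact Finset.prod_eq_zero (Finset.mem_univ k) (by simp [trace_pauliMat_mul, hk])

lemma pauliString_zero : pauliString (0 : Fin n → Fin 4) = 1 := by
  ext i j
  simp [pauliString, pauliMat, one_apply, Fintype.prod_boole, funext_iff]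

end Pauli

lemma trace_unitary_conj {ι : Type*} [Fintype ι] [DecidableEq ι] {U : Matrix ι ι ℂ}
    (hU : Uᴴ * U = 1) (ρ : Matrix ι ι ℂ) : (U * ρ * Uᴴ).trace = ρ.trace := by
  rw [trace_mul_cycle, hU, Matrix.one_mul]

lemma trace_conj_mul_conj {ι : Type*} [Fintype ι] [DecidableEq ι] {U : Matrix ι ι ℂ}
    (hU : Uᴴ * U = 1) (A B : Matrix ι ι ℂ) :
    ((U * A * Uᴴ) * (U * B * Uᴴ)).trace = (A * B).trace := by
  have h : (U * A * Uᴴ) * (U * B * Uᴴ) = U * (A * B) * Uᴴ := by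
    simp only [Matrix.mul_assoc, ← Matrix.mul_assoc Uᴴ U, hU, Matrix.one_mul]
  rw [h, trace_mul_cycle, hU, Matrix.one_mul]

section Clifford

variable {n : ℕ} {U : Matrix (QIdx n) (QIdx n) ℂ}

lemma IsCliffordUnitary.conjTranspose_mul_self (hU : IsCliffordUnitary U) : Uᴴ * U = 1 :=
  Matrix.mem_unitaryGroup_iff'.mp hU.1

lemma IsCliffordUnitary.exists_signed_perm (hU : IsCliffordUnitary U) :
    ∃ (g : (Fin n → Fin 4) → Fin n → Fin 4) (ε : (Fin n → Fin 4) → ℝ), g.Bijective ∧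
      (∀ a, ε a = 1 ∨ ε a = -1) ∧ ∀ a, pauliString (g a) = (ε a : ℂ) • (U * pauliString a * Uᴴ) := by
  choose g ε hε hconj using hU.2
  have hP : ∀ a, pauliString (g a) = (ε a : ℂ) • (U * pauliString a * Uᴴ) := fun a => by
    rcases hε a with h | h <;> simp [hconj a, h]
  refine ⟨g, ε, Finite.injective_iff_bijective.mp fun a b hab => ?_, hε, hP⟩
  -- Conjugation preserves the trace form, and distinct Pauli strings are trace-orthogonal.
  have htr : (pauliString (g a) * pauliString (g b)).trace
      = (ε a * ε b : ℂ) * (pauliString a * pauliString b).trace := by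
    rw [hP, hP, Matrix.smul_mul, Matrix.mul_smul, trace_smul, trace_smul,
      trace_conj_mul_conj hU.conjTranspose_mul_self, smul_smul, smul_eq_mul]
  rw [hab, trace_pauliString_mul, trace_pauliString_mul, if_pos rfl] at htr
  by_contra hne
  rw [if_neg hne, mul_zero] at htr
  exact pow_ne_zero n two_ne_zero htr

lemma Amom_clifford_conj (hU : IsCliffordUnitary U) (α : ℝ) (ρ : Matrix (QIdx n) (QIdx n) ℂ) :
    Amom α (U * ρ * Uᴴ) = Amom α ρ := by
  obtain ⟨g, ε, hg, hε, hP⟩ := hU.exists_signed_perm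
  have hterm : ∀ a, ‖(U * ρ * Uᴴ * pauliString (g a)).trace‖ = ‖(ρ * pauliString a).trace‖ := by
    intro a
    rw [hP, Matrix.mul_smul, trace_smul, ← trace_conj_mul_conj hU.conjTranspose_mul_self ρ]
    rcases hε a with h | h <;> simp [h]
  unfold Amom
  rw [← Fintype.sum_bijective g hg _ _ fun a => by rw [hterm a]]

end Clifford

lemma norm_sum_smul_rpow_le {ι E : Type*} [Fintype ι] [SeminormedAddCommGroup E] [NormedSpace ℝ E]
    {q : ℝ} (hq : 1 ≤ q) (p : ι → ℝ) (hp : ∀ i, 0 ≤ p i) (hpsum : ∑ i, p i = 1) (z : ι → E) :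
    ‖∑ i, p i • z i‖ ^ q ≤ ∑ i, p i * ‖z i‖ ^ q := by
  have hnorm : ‖∑ i, p i • z i‖ ≤ ∑ i, p i * ‖z i‖ := by
    refine (norm_sum_le _ _).trans_eq (Finset.sum_congr rfl fun i _ => ?_)
    rw [norm_smul, Real.norm_of_nonneg (hp i)]
  calc ‖∑ i, p i • z i‖ ^ q ≤ (∑ i, p i * ‖z i‖) ^ q :=
        Real.rpow_le_rpow (norm_nonneg _) hnorm (by linarith)
    _ ≤ ∑ i, p i * ‖z i‖ ^ q :=
        Real.rpow_arith_mean_le_arith_mean_rpow _ _ _ (fun i _ => hp i) hpsum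
          (fun i _ => norm_nonneg _) hq

section Amom

variable {n : ℕ}

lemma Amom_sum_smul_le {ι : Type*} [Fintype ι] {α : ℝ} (hα : 1 ≤ 2 * α) (p : ι → ℝ)
    (hp : ∀ i, 0 ≤ p i) (hpsum : ∑ i, p i = 1) (σ : ι → Matrix (QIdx n) (QIdx n) ℂ) :
    Amom α (∑ i, (p i : ℂ) • σ i) ≤ ∑ i, p i * Amom α (σ i) := by
  have hterm : ∀ a, ‖((∑ i, (p i : ℂ) • σ i) * pauliString a).trace‖ ^ (2 * α)
      ≤ ∑ i, p i * ‖(σ i * pauliString a).trace‖ ^ (2 * α) := fun a => by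
    simpa only [Finset.sum_mul, trace_sum, smul_mul, trace_smul, Complex.coe_smul] using
      norm_sum_smul_rpow_le hα p hp hpsum fun i => (σ i * pauliString a).trace
  calc Amom α (∑ i, (p i : ℂ) • σ i)
      ≤ ((2 : ℝ) ^ n)⁻¹ * ∑ a, ∑ i, p i * ‖(σ i * pauliString a).trace‖ ^ (2 * α) :=
        mul_le_mul_of_nonneg_left (Finset.sum_le_sum fun a _ => hterm a) (by positivity)
    _ = ∑ i, p i * Amom α (σ i) := by
        simp only [Amom, Finset.sum_comm (γ := Fin n → Fin 4), Finset.mul_sum]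
        exact Finset.sum_congr rfl fun i _ => Finset.sum_congr rfl fun a _ => by ring

lemma inv_two_pow_le_Amom (α : ℝ) {ρ : Matrix (QIdx n) (QIdx n) ℂ} (hρ : ρ.trace = 1) :
    ((2 : ℝ) ^ n)⁻¹ ≤ Amom α ρ := by
  have hone : ‖(ρ * pauliString 0).trace‖ ^ (2 * α) = 1 := by
    rw [pauliString_zero, Matrix.mul_one, hρ, norm_one, Real.one_rpow]
  refine le_mul_of_one_le_right (by positivity) (hone ▸ ?_)
  exact Finset.single_le_sum (f := fun a => ‖(ρ * pauliString a).trace‖ ^ (2 * α))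
    (fun a _ => Real.rpow_nonneg (norm_nonneg _) _) (Finset.mem_univ 0)

end Amom

/-- mixed unital Clifford channels cannot increase the Pauli
spectrum moments: `A_α(Λ(ρ)) ≤ A_α(ρ)` for every integer `α > 1`. -/
theorem Amom_nonincreasing_mixed_unital_clifford {n k : ℕ}
    (p : Fin k → ℝ) (U : Fin k → Matrix (QIdx n) (QIdx n) ℂ)
    (hp : ∀ i, 0 ≤ p i) (hpsum : ∑ i, p i = 1)
    (hU : ∀ i, IsCliffordUnitary (U i))
    (ρ : Matrix (QIdx n) (QIdx n) ℂ) (hρ : IsState ρ)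
    (α : ℕ) (hα : 1 < α) :
    Amom (α : ℝ) (∑ i, (p i : ℂ) • (U i * ρ * (U i)ᴴ)) ≤ Amom (α : ℝ) ρ ∧
    - Real.log (Amom (α : ℝ) (∑ i, (p i : ℂ) • (U i * ρ * (U i)ᴴ))) ≥
      - Real.log (Amom (α : ℝ) ρ) := by
  have hα' : 1 ≤ 2 * (α : ℝ) := by
    have : (1 : ℝ) < α := by exact_mod_cast hα
    linarith
  have hle : Amom (α : ℝ) (∑ i, (p i : ℂ) • (U i * ρ * (U i)ᴴ)) ≤ Amom (α : ℝ) ρ :=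
    calc _ ≤ ∑ i, p i * Amom (α : ℝ) (U i * ρ * (U i)ᴴ) := Amom_sum_smul_le hα' p hp hpsum _
      _ = Amom (α : ℝ) ρ := by
        simp only [Amom_clifford_conj (hU _), ← Finset.sum_mul, hpsum, one_mul]
  have htrace : (∑ i, (p i : ℂ) • (U i * ρ * (U i)ᴴ)).trace = 1 := by
    simp only [trace_sum, trace_smul, trace_unitary_conj (hU _).conjTranspose_mul_self, hρ.2,
      smul_eq_mul, mul_one]
    exact_mod_cast hpsum
  have hpos := (inv_pos.mpr (pow_pos two_pos n)).trans_le (inv_two_pow_le_Amom (α : ℝ) htrace)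
  exact ⟨hle, neg_le_neg (Real.log_le_log hpos hle)⟩

end
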